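/- The map Θ from the ℝ-linear span of (k,l)-partition diagrams to Hom_{Sₙ}((ℝⁿ)^{⊗k},(ℝⁿ)^{⊗l}), sending d_π to E_π, is a surjective linear map; i.e., every Sₙ-equivariant linear map between these tensor powers is a real linear combination of the matrices E_π. -/

import Mathlib

open scoped Classical

/-- The matrix `E_π` associated to a set partition `π` of the `l` output positions and
`k` input positions. -/
noncomputable def Emat (n l k : ℕ) (π : Setoid (Fin l ⊕ Fin k)) :
    Matrix (Fin l → Fin n) (Fin k → Fin n) ℝ :=
  Matrix.of fun I J =>
    if ∀ x y, π.r x y → Sum.elim I J x = Sum.elim I J y then 1 else 0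

/-- The matrix of the diagonal action of a permutation `g ∈ Sₙ` on the `k`-th tensor power. -/
noncomputable def permMat (n k : ℕ) (g : Equiv.Perm (Fin n)) :
    Matrix (Fin k → Fin n) (Fin k → Fin n) ℝ :=
  Matrix.of fun I J => if I = g ∘ J then 1 else 0

/-- The map `Θ` sending a formal linear combination of partition diagrams to the
corresponding linear combination of the matrices `E_π`, as a linear map from the free
vector space on set partitions of `[l+k]`. -/
noncomputable def Theta (n l k : ℕ) :
    (Setoid (Fin l ⊕ Fin k) →₀ ℝ) →ₗ[ℝ] Matrix (Fin l → Fin n) (Fin k → Fin n) ℝ :=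
  Finsupp.linearCombination ℝ (Emat n l k)

/-!
An `Sₙ`-equivariant matrix `M` is constant on the `Sₙ`-orbits of index pairs `(I, J)`, and
these orbits are the fibres of `(I, J) ↦ ker (Sum.elim I J)`: two maps into a finite set with the
same kernel differ by a permutation. Hence `M` is a combination of the orbit indicators
`orbitMat ρ`. Since `E_π = ∑_{ρ ≥ π} orbitMat ρ` is unitriangular for refinement of partitions,
downward induction on `π` puts every `orbitMat π` in the span of the `E_π`.
-/

open Finset Submodule

noncomputable instance Setoid.instFintype {X : Type*} [Fintype X] : Fintype (Setoid X) :=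
  Fintype.ofInjective (fun s : Setoid X => s.r) fun _ _ h => Setoid.ext fun _ _ => by
    simp only at h; rw [h]

theorem Setoid.exists_perm_comp_eq_of_ker_eq {X Y : Type*} [Finite Y] {f g : X → Y}
    (h : Setoid.ker f = Setoid.ker g) : ∃ σ : Equiv.Perm Y, σ ∘ f = g := by
  let e : Set.range f ≃ Set.range g := (quotientKerEquivRange f).symm.trans
    ((Quotient.congrRight fun _ _ => by rw [h]).trans (quotientKerEquivRange g))
  refine ⟨e.extendSubtype, funext fun x => ?_⟩
  have hx : (quotientKerEquivRange f).symm ⟨f x, Set.mem_range_self x⟩ = ⟦x⟧ :=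
    (Equiv.symm_apply_eq _).mpr rfl
  rw [Function.comp_apply, e.extendSubtype_apply_of_mem _ (Set.mem_range_self x)]
  simp only [e, Equiv.trans_apply, hx]
  rfl

theorem mem_span_range_of_eq_sum_ge {R M P : Type*} [Ring R] [AddCommGroup M] [Module R M]
    [PartialOrder P] [Fintype P] {e f : P → M}
    (h : ∀ p, e p = ∑ q ∈ univ.filter (p ≤ ·), f q) (p : P) : f p ∈ span R (Set.range e) := by
  induction p using WellFoundedGT.induction with
  | ind p ih =>
    have hsplit : univ.filter (p ≤ ·) = insert p (univ.filter (p < ·)) := by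
      ext q; simp [le_iff_lt_or_eq, eq_comm, or_comm]
    have hfp : f p = e p - ∑ q ∈ univ.filter (p < ·), f q := by
      rw [h, hsplit, sum_insert (by simp), add_sub_cancel_right]
    rw [hfp]
    exact sub_mem (subset_span ⟨p, rfl⟩) (sum_mem fun q hq => ih q (mem_filter.mp hq).2)

noncomputable def orbitMat (n l k : ℕ) (π : Setoid (Fin l ⊕ Fin k)) :
    Matrix (Fin l → Fin n) (Fin k → Fin n) ℝ :=
  Matrix.of fun I J => if Setoid.ker (Sum.elim I J) = π then 1 else 0

section

variable {n l k : ℕ}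

theorem mul_permMat_apply {α : Type*} (M : Matrix α (Fin k → Fin n) ℝ)
    (g : Equiv.Perm (Fin n)) (I : α) (J : Fin k → Fin n) :
    (M * permMat n k g) I J = M I (g ∘ J) := by
  simp [Matrix.mul_apply, permMat]

theorem permMat_mul_apply {β : Type*} (M : Matrix (Fin l → Fin n) β ℝ)
    (g : Equiv.Perm (Fin n)) (I : Fin l → Fin n) (J : β) :
    (permMat n l g * M) (g ∘ I) J = M I J := by
  simp [Matrix.mul_apply, permMat, g.injective.comp_left.eq_iff]

theorem apply_comp_eq_of_forall_commute {M : Matrix (Fin l → Fin n) (Fin k → Fin n) ℝ}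
    (hM : ∀ g, M * permMat n k g = permMat n l g * M) (g : Equiv.Perm (Fin n))
    (I : Fin l → Fin n) (J : Fin k → Fin n) : M (g ∘ I) (g ∘ J) = M I J := by
  simpa only [mul_permMat_apply, permMat_mul_apply] using congr_fun (congr_fun (hM g) (g ∘ I)) J

theorem apply_eq_of_ker_eq {M : Matrix (Fin l → Fin n) (Fin k → Fin n) ℝ}
    (hM : ∀ g, M * permMat n k g = permMat n l g * M) {I I' : Fin l → Fin n}
    {J J' : Fin k → Fin n} (h : Setoid.ker (Sum.elim I J) = Setoid.ker (Sum.elim I' J')) :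
    M I J = M I' J' := by
  obtain ⟨σ, hσ⟩ := Setoid.exists_perm_comp_eq_of_ker_eq h
  rw [Sum.comp_elim, Sum.elim_eq_iff] at hσ
  rw [← hσ.1, ← hσ.2, apply_comp_eq_of_forall_commute hM]

theorem Emat_eq_sum_orbitMat (π : Setoid (Fin l ⊕ Fin k)) :
    Emat n l k π = ∑ ρ ∈ univ.filter (π ≤ ·), orbitMat n l k ρ := by
  ext I J
  simp only [Emat, orbitMat, Matrix.sum_apply, Matrix.of_apply, sum_ite_eq, mem_filter,
    mem_univ, true_and]
  exact if_congr Iff.rfl rfl rfl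

theorem mem_span_orbitMat {M : Matrix (Fin l → Fin n) (Fin k → Fin n) ℝ}
    (hM : ∀ g, M * permMat n k g = permMat n l g * M) :
    M ∈ span ℝ (Set.range (orbitMat n l k)) := by
  let kerOf : (Fin l → Fin n) × (Fin k → Fin n) → Setoid (Fin l ⊕ Fin k) :=
    fun p => Setoid.ker (Sum.elim p.1 p.2)
  have hfac : (fun p => M p.1 p.2).FactorsThrough kerOf := fun _ _ h => apply_eq_of_ker_eq hM h
  let w := Function.extend kerOf (fun p => M p.1 p.2) 0
  have hM_eq : M = ∑ π, w π • orbitMat n l k π := by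
    ext I J
    simp only [orbitMat, Matrix.sum_apply, Matrix.smul_apply, Matrix.of_apply, smul_eq_mul,
      mul_ite, mul_one, mul_zero, sum_ite_eq, mem_univ, if_true]
    exact (hfac.extend_apply 0 (I, J)).symm
  rw [hM_eq]
  exact sum_mem fun π _ => smul_mem _ _ (subset_span ⟨π, rfl⟩)

end

/-- `Θ` is surjective onto `Hom_{Sₙ}((ℝⁿ)^{⊗k}, (ℝⁿ)^{⊗l})`: every `Sₙ`-equivariant
linear map between these tensor powers is a real linear combination of the matrices
`E_π`. -/
theorem Theta_surjective (n l k : ℕ) :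
    ∀ M : Matrix (Fin l → Fin n) (Fin k → Fin n) ℝ,
      (∀ g : Equiv.Perm (Fin n), M * permMat n k g = permMat n l g * M) →
      ∃ c : Setoid (Fin l ⊕ Fin k) →₀ ℝ, Theta n l k c = M := by
  intro M hM
  have hspan : span ℝ (Set.range (orbitMat n l k)) ≤ span ℝ (Set.range (Emat n l k)) :=
    span_le.mpr <| Set.range_subset_iff.mpr <|
      mem_span_range_of_eq_sum_ge Emat_eq_sum_orbitMat
  rw [← LinearMap.mem_range, Theta, Finsupp.range_linearCombination]
  exact hspan (mem_span_orbitMat hM)
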